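/- The join-dependency relation on the join-irreducible elements of the permutohedron P(n) is a strict partial order (in particular it has no cycles), and consequently the lattice P(n) is a bounded homomorphic image of a free lattice. -/

import Mathlib

/-!
The join-irreducible clopen subsets of `J_n` are the arcs of Reading's noncrossing arc diagrams:
`arcSet u v S` consists of the pairs `(i, j)` with `u ≤ i < j ≤ v` whose left end is `u` or lies
outside `S` and whose right end is `v` or lies in `S`. Between arcs, `p D q` holds exactly when the
arc of `q` is a proper subarc of the arc of `p`, i.e. `S` restricted to a smaller interval: a pair
of `p` that needs the top pair `(u', v')` of `q` forces the interval inclusion, and any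
disagreement of the two point sets would give a way around `(u', v')`; conversely an explicit
clopen witness realises the dependency. Hence `D` is the strict subarc order.

By Day's theorem a finite lattice whose relation `D` has no cycle is lower bounded: the least
preimage of a join-irreducible `p` is built by recursion along `D`, because a join cover of `p`
that cannot be refined consists of elements on which `p` depends. Complementation in `J_n` is an
order-reversing involution of `P(n)`, so the dual lattice has the same property, which gives the
greatest preimages.
-/

/-- `J_n = {(i,j) : 1 ≤ i < j ≤ n}`. -/
def JnS (n : ℕ) : Set (ℕ × ℕ) := {p | 1 ≤ p.1 ∧ p.1 < p.2 ∧ p.2 ≤ n}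

/-- Transitivity of a set of pairs, viewed as a binary relation. -/
def TransSet (x : Set (ℕ × ℕ)) : Prop := ∀ i j k : ℕ, (i, j) ∈ x → (j, k) ∈ x → (i, k) ∈ x

/-- A subset of `J_n` is closed if it is transitive. -/
def ClosedIn (n : ℕ) (x : Set (ℕ × ℕ)) : Prop := x ⊆ JnS n ∧ TransSet x

/-- A subset of `J_n` is clopen if both it and its complement in `J_n` are closed. -/
def ClopenIn (n : ℕ) (x : Set (ℕ × ℕ)) : Prop := ClosedIn n x ∧ ClosedIn n (JnS n \ x)

/-- The transitive closure of a set of pairs. -/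
def clS (x : Set (ℕ × ℕ)) : Set (ℕ × ℕ) :=
  {p | Relation.TransGen (fun a b => (a, b) ∈ x) p.1 p.2}

/-- The interior: the largest open subset of `x`. -/
def intS (n : ℕ) (x : Set (ℕ × ℕ)) : Set (ℕ × ℕ) := JnS n \ clS (JnS n \ x)

/-- Join-irreducible elements of the permutohedron `P(n)`. -/
def JoinIrrP (n : ℕ) (p : Set (ℕ × ℕ)) : Prop :=
  ClopenIn n p ∧ p ≠ ∅ ∧
    ∀ x y, ClopenIn n x → ClopenIn n y → p = clS (x ∪ y) → p = x ∨ p = y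

/-- The join-dependency relation on `P(n)`: `p D q` iff `q` is join-irreducible, `p ≠ q`,
and there is a clopen `x` with `p ≤ q ∨ x` but `p ≰ q' ∨ x` for every `q' < q`
(equivalently `p ≰ q₊ ∨ x`, `q₊` the unique lower cover of `q`). -/
def DrelP (n : ℕ) (p q : Set (ℕ × ℕ)) : Prop :=
  JoinIrrP n q ∧ p ≠ q ∧
    ∃ x, ClopenIn n x ∧ p ⊆ clS (q ∪ x) ∧
      ∀ q', ClopenIn n q' → q' ⊂ q → ¬ p ⊆ clS (q' ∪ x)

/-- `F` is a free lattice on the generating set `X ⊆ F`. -/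
def IsFreeLatticeOn (F : Type) [Lattice F] (X : Set F) : Prop :=
  ∀ (M : Type) [Lattice M] (g : X → M), ∃! h : LatticeHom F M, ∀ v : X, h v = g v

/-- There is a surjective lattice homomorphism from `F` onto the permutohedron `P(n)`
that is bounded: each fiber has a least and a greatest element. -/
def IsBoundedSurjectionOntoPerm (n : ℕ) (F : Type) [Lattice F] : Prop :=
  ∃ f : F → Set (ℕ × ℕ),
    (∀ z, ClopenIn n (f z)) ∧
    (∀ x, ClopenIn n x → ∃ z, f z = x) ∧
    (∀ z w, f (z ⊔ w) = clS (f z ∪ f w) ∧ f (z ⊓ w) = intS n (f z ∩ f w)) ∧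
    (∀ x, ClopenIn n x →
      (∃ lb, IsLeast {z | f z = x} lb) ∧ ∃ ub, IsGreatest {z | f z = x} ub)

/-! ### Free lattices -/

def LatticeGenerated {F I : Type*} [Lattice F] (g : I → F) : Prop :=
  ∀ P : F → Prop, (∀ i, P (g i)) → (∀ x y, P x → P y → P (x ⊔ y)) →
    (∀ x y, P x → P y → P (x ⊓ y)) → ∀ z, P z

namespace LatticeGenerated

variable {F I : Type*} [Lattice F] {g : I → F}

theorem dual (hg : LatticeGenerated g) : LatticeGenerated (OrderDual.toDual ∘ g) :=
  fun P hg' hsup hinf z => hg (P ∘ OrderDual.toDual) hg' (fun _ _ => hinf _ _)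
    (fun _ _ => hsup _ _) (OrderDual.ofDual z)

theorem latticeHom_ext {M : Type*} [Lattice M] (hg : LatticeGenerated g)
    {h₁ h₂ : LatticeHom F M} (h : ∀ i, h₁ (g i) = h₂ (g i)) : h₁ = h₂ :=
  DFunLike.ext _ _ <| hg _ h (fun x y hx hy => by rw [map_sup, map_sup, hx, hy])
    (fun x y hx hy => by rw [map_inf, map_inf, hx, hy])

end LatticeGenerated

inductive LatticeTerm (I : Type) : Type
  | var : I → LatticeTerm I
  | sup : LatticeTerm I → LatticeTerm I → LatticeTerm I
  | inf : LatticeTerm I → LatticeTerm I → LatticeTerm I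

namespace LatticeTerm

variable {I : Type}

def eval {M : Type} [Lattice M] (v : I → M) : LatticeTerm I → M
  | var i => v i
  | sup t s => t.eval v ⊔ s.eval v
  | inf t s => t.eval v ⊓ s.eval v

-- Lattices in `Type` suffice here, since `IsFreeLatticeOn` only maps into those.
instance : Preorder (LatticeTerm I) where
  le t s := ∀ (M : Type) [Lattice M] (v : I → M), t.eval v ≤ s.eval v
  le_refl _ _ _ _ := le_rfl
  le_trans _ _ _ h₁ h₂ M _ v := (h₁ M v).trans (h₂ M v)

end LatticeTerm

def FreeLattice (I : Type) : Type := Antisymmetrization (LatticeTerm I) (· ≤ ·)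

namespace FreeLattice

open LatticeTerm Finset

variable {I : Type}

instance : PartialOrder (FreeLattice I) :=
  inferInstanceAs (PartialOrder (Antisymmetrization (LatticeTerm I) (· ≤ ·)))

def mk (t : LatticeTerm I) : FreeLattice I := toAntisymmetrization (· ≤ ·) t

@[elab_as_elim]
theorem ind {P : FreeLattice I → Prop} (h : ∀ t, P (mk t)) (z : FreeLattice I) : P z :=
  Quotient.ind h z

instance : Lattice (FreeLattice I) where
  sup := Quotient.map₂ LatticeTerm.sup fun _ _ ht _ _ hs =>
    ⟨fun M _ v => sup_le_sup (ht.1 M v) (hs.1 M v),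
      fun M _ v => sup_le_sup (ht.2 M v) (hs.2 M v)⟩
  inf := Quotient.map₂ LatticeTerm.inf fun _ _ ht _ _ hs =>
    ⟨fun M _ v => inf_le_inf (ht.1 M v) (hs.1 M v),
      fun M _ v => inf_le_inf (ht.2 M v) (hs.2 M v)⟩
  le_sup_left := ind fun _ => ind fun _ _ _ _ => le_sup_left
  le_sup_right := ind fun _ => ind fun _ _ _ _ => le_sup_right
  sup_le := ind fun _ => ind fun _ => ind fun _ h₁ h₂ M _ v => sup_le (h₁ M v) (h₂ M v)
  inf_le_left := ind fun _ => ind fun _ _ _ _ => inf_le_left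
  inf_le_right := ind fun _ => ind fun _ _ _ _ => inf_le_right
  le_inf := ind fun _ => ind fun _ => ind fun _ h₁ h₂ M _ v => le_inf (h₁ M v) (h₂ M v)

def of (i : I) : FreeLattice I := mk (var i)

def lift {M : Type} [Lattice M] (v : I → M) : LatticeHom (FreeLattice I) M where
  toFun := Quotient.lift (eval v) fun _ _ h => le_antisymm (h.1 M v) (h.2 M v)
  map_sup' := ind fun _ => ind fun _ => rfl
  map_inf' := ind fun _ => ind fun _ => rfl

theorem lift_of {M : Type} [Lattice M] (v : I → M) (i : I) : lift v (of i) = v i := rfl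

theorem latticeGenerated_of : LatticeGenerated (of : I → FreeLattice I) := by
  intro P hof hsup hinf z
  induction z using ind with | _ t => ?_
  induction t with
  | var i => exact hof i
  | sup t s ht hs => exact hsup _ _ ht hs
  | inf t s ht hs => exact hinf _ _ ht hs

theorem isFreeLatticeOn_range_of : IsFreeLatticeOn (FreeLattice I) (Set.range of) := by
  intro M _ g
  let v : I → M := fun i => g ⟨of i, i, rfl⟩
  refine ⟨lift v, ?_, fun h hh => latticeGenerated_of.latticeHom_ext fun i =>
    (hh ⟨of i, i, rfl⟩).trans (lift_of v i).symm⟩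
  rintro ⟨_, i, rfl⟩
  exact lift_of v i

instance [Fintype I] [Nonempty I] : BoundedOrder (FreeLattice I) where
  top := univ.sup' univ_nonempty of
  le_top := latticeGenerated_of _ (fun i => le_sup' of (mem_univ i)) (fun _ _ => sup_le)
    (fun _ _ h _ => inf_le_of_left_le h)
  bot := univ.inf' univ_nonempty of
  bot_le := latticeGenerated_of _ (fun i => inf'_le of (mem_univ i))
    (fun _ _ h _ => le_sup_of_le_left h) (fun _ _ => le_inf)

end FreeLattice

/-! ### Join dependency and lower bounded homomorphisms -/

section JoinDep

variable {L : Type*} [Lattice L]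

def JoinDep (p q : L) : Prop :=
  SupIrred q ∧ p ≠ q ∧ ∃ x, p ≤ q ⊔ x ∧ ∀ q' < q, ¬p ≤ q' ⊔ x

theorem OrderIso.supIrred_apply_iff {M : Type*} [Lattice M] (e : L ≃o M) {a : L} :
    SupIrred (e a) ↔ SupIrred a := by
  simp only [SupIrred, e.isMin_apply, e.surjective.forall, ← map_sup, e.injective.eq_iff]

theorem OrderIso.joinDep_apply_iff {M : Type*} [Lattice M] (e : L ≃o M) {p q : L} :
    JoinDep (e p) (e q) ↔ JoinDep p q := by
  simp only [JoinDep, e.supIrred_apply_iff, e.injective.ne_iff, e.surjective.exists,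
    e.surjective.forall, ← map_sup, e.le_iff_le, e.lt_iff_lt]

theorem wellFounded_joinDep_of_trans [Finite L]
    (htrans : ∀ p q r : L, SupIrred p → SupIrred q → SupIrred r →
      JoinDep p q → JoinDep q r → JoinDep p r) :
    WellFounded fun q p : L => SupIrred p ∧ JoinDep p q :=
  have : IsTrans L fun q p => SupIrred p ∧ JoinDep p q :=
    ⟨fun _ _ _ ⟨hb, hba⟩ ⟨hc, hcb⟩ => ⟨hc, htrans _ _ _ hc hb hba.1 hcb hba⟩⟩
  have : Std.Irrefl fun q p : L => SupIrred p ∧ JoinDep p q := ⟨fun _ h => h.2.2.1 rfl⟩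
  Finite.wellFounded_of_trans_of_irrefl _

end JoinDep

theorem exists_joinDep_cover {L : Type*} [Lattice L] [OrderBot L] [WellFoundedLT L]
    {p b₁ b₂ : L} (h : p ≤ b₁ ⊔ b₂) (h₁ : ¬p ≤ b₁) (h₂ : ¬p ≤ b₂) :
    ∃ C : Finset L, p ≤ C.sup id ∧ ∀ q ∈ C, (q ≤ b₁ ∨ q ≤ b₂) ∧ JoinDep p q := by
  classical
  let IsCover : Multiset L → Prop := fun C =>
    p ≤ C.sup ∧ ∀ q ∈ C, SupIrred q ∧ (q ≤ b₁ ∨ q ≤ b₂)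
  obtain ⟨s₁, hs₁, hs₁'⟩ := exists_supIrred_decomposition b₁
  obtain ⟨s₂, hs₂, hs₂'⟩ := exists_supIrred_decomposition b₂
  have hcover : IsCover (s₁.val + s₂.val) := by
    refine ⟨?_, fun q hq => ?_⟩
    · rwa [Multiset.sup_add, ← Multiset.map_id s₁.val, ← Multiset.map_id s₂.val,
        ← Finset.sup_def, ← Finset.sup_def, hs₁, hs₂]
    · rcases Multiset.mem_add.1 hq with hq | hq
      · exact ⟨hs₁' hq, .inl (hs₁ ▸ Finset.le_sup (f := id) hq)⟩
      · exact ⟨hs₂' hq, .inr (hs₂ ▸ Finset.le_sup (f := id) hq)⟩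
  -- A Dershowitz–Manna-minimal cover cannot be refined, which is exactly join-dependence.
  obtain ⟨C, ⟨hpC, hC⟩, hmin⟩ :=
    Multiset.wellFounded_isDershowitzMannaLT.has_min {C | IsCover C} ⟨_, hcover⟩
  refine ⟨C.toFinset, hpC.trans (Multiset.sup_le.2 fun q hq =>
    Finset.le_sup (f := id) (Multiset.mem_toFinset.2 hq)), fun q hq => ?_⟩
  rw [Multiset.mem_toFinset] at hq
  have hCq : C = C.erase q + {q} := by
    rw [add_comm, Multiset.singleton_add, Multiset.cons_erase hq]
  refine ⟨(hC q hq).2, ⟨(hC q hq).1, ?_, (C.erase q).sup, ?_, fun q' hq' hpq' => ?_⟩⟩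
  · rintro rfl
    exact (hC p hq).2.elim h₁ h₂
  · rw [hCq, Multiset.sup_add, Multiset.sup_singleton, sup_comm] at hpC
    exact hpC
  · obtain ⟨s', hs', hs''⟩ := exists_supIrred_decomposition q'
    have hq'q : ∀ r ∈ s', r < q := fun r hr => (hs' ▸ Finset.le_sup (f := id) hr).trans_lt hq'
    refine hmin (C.erase q + s'.val) ⟨?_, fun r hr => ?_⟩
      ⟨C.erase q, s'.val, {q}, by simp, rfl, hCq,
        fun r hr => ⟨q, Multiset.mem_singleton_self q, hq'q r hr⟩⟩
    · rwa [Multiset.sup_add, ← Multiset.map_id s'.val, ← Finset.sup_def, hs', sup_comm]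
    · rcases Multiset.mem_add.1 hr with hr | hr
      · exact hC r (Multiset.mem_of_mem_erase hr)
      · exact ⟨hs'' hr, (hC q hq).2.imp (le_trans (hq'q r hr).le) (le_trans (hq'q r hr).le)⟩

theorem Monotone.map_bot_of_surjective {α β : Type*} [Preorder α] [OrderBot α] [PartialOrder β]
    [OrderBot β] {f : α → β} (hf : Monotone f) (hs : Function.Surjective f) : f ⊥ = ⊥ :=
  let ⟨_, hz⟩ := hs ⊥
  le_bot_iff.1 (hz ▸ hf bot_le)

theorem Monotone.map_top_of_surjective {α β : Type*} [Preorder α] [OrderTop α] [PartialOrder β]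
    [OrderTop β] {f : α → β} (hf : Monotone f) (hs : Function.Surjective f) : f ⊤ = ⊤ :=
  let ⟨_, hz⟩ := hs ⊤
  top_le_iff.1 (hz ▸ hf le_top)

section LeastPreimage

open Finset
open scoped Classical

variable {F L I : Type*} [Lattice F] [BoundedOrder F] [Lattice L] [BoundedOrder L] [Fintype L]
  [Fintype I] (f : LatticeHom F L) (g : I → F)
  (hD : WellFounded fun q p : L => SupIrred p ∧ JoinDep p q)

noncomputable def joinDepCovers (p : L) : Finset (Finset L) :=
  univ.filter fun C => p ≤ C.sup id ∧ ∀ q ∈ C, SupIrred p ∧ JoinDep p q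

/-- Day's `β` on join-irreducibles: the generators above `p`, met with the join of `β` over each
cover of `p` by join-dependent elements; the recursion terminates since `D` is well founded. -/
noncomputable def leastPreimageSupIrred : L → F :=
  hD.fix fun p rec => (univ.filter fun i => p ≤ f (g i)).inf g ⊓
    (joinDepCovers p).attach.inf fun C => C.1.attach.sup fun q =>
      rec q.1 ((mem_filter.1 C.2).2.2 q.1 q.2)

noncomputable def leastPreimage (a : L) : F :=
  (univ.filter fun p => SupIrred p ∧ p ≤ a).sup (leastPreimageSupIrred f g hD)

theorem leastPreimageSupIrred_eq (p : L) :
    leastPreimageSupIrred f g hD p = (univ.filter fun i => p ≤ f (g i)).inf g ⊓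
      (joinDepCovers p).inf fun C => C.sup (leastPreimageSupIrred f g hD) := by
  rw [leastPreimageSupIrred, hD.fix_eq]
  simp only [sup_attach]
  exact congrArg _ (inf_attach _ fun C : Finset L => C.sup _)

theorem leastPreimageSupIrred_le_of_le {p : L} {i : I} (h : p ≤ f (g i)) :
    leastPreimageSupIrred f g hD p ≤ g i := by
  rw [leastPreimageSupIrred_eq]
  exact inf_le_of_left_le (inf_le (mem_filter.2 ⟨mem_univ i, h⟩))

theorem leastPreimageSupIrred_le_sup {p : L} {C : Finset L} (hC : C ∈ joinDepCovers p) :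
    leastPreimageSupIrred f g hD p ≤ C.sup (leastPreimageSupIrred f g hD) := by
  rw [leastPreimageSupIrred_eq]
  exact inf_le_of_right_le (inf_le hC)

variable {f g}

theorem map_leastPreimageSupIrred (hfg : Function.Surjective (f ∘ g)) (p : L) :
    f (leastPreimageSupIrred f g hD p) = p := by
  have htop := (OrderHomClass.mono f).map_top_of_surjective hfg.of_comp
  have hbot := (OrderHomClass.mono f).map_bot_of_surjective hfg.of_comp
  induction p using hD.induction with | _ p ih => ?_
  rw [leastPreimageSupIrred_eq, map_inf, apply_inf_eq_inf_comp f (map_inf f) htop,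
    apply_inf_eq_inf_comp f (map_inf f) htop]
  obtain ⟨i, hi⟩ := hfg p
  refine le_antisymm
    (inf_le_of_left_le ((inf_le (mem_filter.2 ⟨mem_univ i, hi.ge⟩)).trans_eq hi))
    (le_inf (Finset.le_inf fun j hj => (mem_filter.1 hj).2) (Finset.le_inf fun C hC => ?_))
  rw [Function.comp_apply, apply_sup_eq_sup_comp f (map_sup f) hbot]
  obtain ⟨hpC, hC⟩ := (mem_filter.1 hC).2
  exact hpC.trans (Finset.sup_mono_fun fun q hq => (ih q (hC q hq)).ge)

theorem map_leastPreimage (hfg : Function.Surjective (f ∘ g)) (a : L) :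
    f (leastPreimage f g hD a) = a := by
  obtain ⟨s, hs, hs'⟩ := exists_supIrred_decomposition a
  rw [leastPreimage, apply_sup_eq_sup_comp f (map_sup f)
    ((OrderHomClass.mono f).map_bot_of_surjective hfg.of_comp)]
  refine le_antisymm (Finset.sup_le fun p hp => ?_) (hs ▸ Finset.sup_le fun p hp => ?_)
  · exact (map_leastPreimageSupIrred hD hfg p).trans_le (mem_filter.1 hp).2.2
  · refine (map_leastPreimageSupIrred hD hfg p).ge.trans (le_sup (f := f ∘ _) ?_)
    exact mem_filter.2 ⟨mem_univ p, hs' hp, hs ▸ le_sup (f := id) hp⟩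

theorem leastPreimageSupIrred_le (hg : LatticeGenerated g) (z : F) :
    ∀ p, SupIrred p → p ≤ f z → leastPreimageSupIrred f g hD p ≤ z := by
  refine hg (fun z => ∀ p, SupIrred p → p ≤ f z → leastPreimageSupIrred f g hD p ≤ z)
    (fun i p _ hp => leastPreimageSupIrred_le_of_le f g hD hp)
    (fun x y hx hy p hp hpxy => ?_) (fun x y hx hy p hp hpxy => ?_) z
  · rw [map_sup] at hpxy
    by_cases hpx : p ≤ f x
    · exact (hx p hp hpx).trans le_sup_left
    by_cases hpy : p ≤ f y
    · exact (hy p hp hpy).trans le_sup_right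
    obtain ⟨C, hpC, hC⟩ := exists_joinDep_cover hpxy hpx hpy
    refine (leastPreimageSupIrred_le_sup f g hD (mem_filter.2
      ⟨mem_univ C, hpC, fun q hq => ⟨hp, (hC q hq).2⟩⟩)).trans (Finset.sup_le fun q hq => ?_)
    rcases (hC q hq).1 with hqx | hqy
    · exact (hx q (hC q hq).2.1 hqx).trans le_sup_left
    · exact (hy q (hC q hq).2.1 hqy).trans le_sup_right
  · rw [map_inf] at hpxy
    exact le_inf (hx p hp (hpxy.trans inf_le_left)) (hy p hp (hpxy.trans inf_le_right))

theorem isLeast_leastPreimage (hg : LatticeGenerated g) (hfg : Function.Surjective (f ∘ g))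
    (a : L) : IsLeast {z | f z = a} (leastPreimage f g hD a) :=
  ⟨map_leastPreimage hD hfg a, fun z hz => Finset.sup_le fun p hp =>
    leastPreimageSupIrred_le hD hg z p (mem_filter.1 hp).2.1 ((mem_filter.1 hp).2.2.trans hz.ge)⟩

end LeastPreimage

theorem exists_isLeast_isGreatest_fiber {F L I : Type*} [Lattice F] [BoundedOrder F] [Lattice L]
    [BoundedOrder L] [Fintype L] [Fintype I] {f : LatticeHom F L} {g : I → F}
    (hg : LatticeGenerated g) (hfg : Function.Surjective (f ∘ g))
    (hD : WellFounded fun q p : L => SupIrred p ∧ JoinDep p q)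
    (hD' : WellFounded fun q p : Lᵒᵈ => SupIrred p ∧ JoinDep p q) (a : L) :
    (∃ z, IsLeast {z | f z = a} z) ∧ ∃ z, IsGreatest {z | f z = a} z :=
  ⟨⟨_, isLeast_leastPreimage hD hg hfg a⟩,
    ⟨_, isLeast_leastPreimage (f := LatticeHom.dual f) (g := OrderDual.toDual ∘ g) hD' hg.dual
      hfg (OrderDual.toDual a)⟩⟩

/-! ### The lattice of clopen subsets of `J_n` -/

section Closure

open Relation

variable {n : ℕ} {s t x y : Set (ℕ × ℕ)}

theorem mem_clS {a b : ℕ} : (a, b) ∈ clS s ↔ TransGen (fun a b => (a, b) ∈ s) a b := Iff.rfl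

theorem subset_clS (s : Set (ℕ × ℕ)) : s ⊆ clS s := fun _ h => .single h

theorem clS_mono (h : s ⊆ t) : clS s ⊆ clS t :=
  fun _ h' => TransGen.mono (fun _ _ h'' => h h'') _ _ h'

theorem transSet_clS (s : Set (ℕ × ℕ)) : TransSet (clS s) := fun _ _ _ => TransGen.trans

theorem TransSet.clS_eq (h : TransSet s) : clS s = s := by
  refine (subset_clS s).antisymm' fun ⟨a, b⟩ hab => ?_
  rw [mem_clS] at hab
  induction hab with
  | single h' => exact h'
  | tail _ h' ih => exact h _ _ _ ih h'

theorem transSet_JnS (n : ℕ) : TransSet (JnS n) :=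
  fun _ _ _ h₁ h₂ => ⟨h₁.1, h₁.2.1.trans h₂.2.1, h₂.2.2⟩

theorem clS_subset_JnS (h : s ⊆ JnS n) : clS s ⊆ JnS n :=
  (transSet_JnS n).clS_eq ▸ clS_mono h

theorem le_of_reflTransGen (hs : s ⊆ JnS n) {a b : ℕ}
    (h : ReflTransGen (fun a b => (a, b) ∈ s) a b) : a ≤ b := by
  induction h with
  | refl => exact le_rfl
  | tail _ h' ih => exact ih.trans (hs h').2.1.le

theorem mem_JnS_of_lt_of_lt {i j k : ℕ} (h : (i, k) ∈ JnS n) (hij : i < j) (hjk : j < k) :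
    (i, j) ∈ JnS n ∧ (j, k) ∈ JnS n :=
  ⟨⟨h.1, hij, hjk.le.trans h.2.2⟩, ⟨h.1.trans hij.le, hjk, h.2.2⟩⟩

theorem clopenIn_iff : ClopenIn n x ↔ x ⊆ JnS n ∧ TransSet x ∧
    ∀ i j k, (i, k) ∈ x → i < j → j < k → (i, j) ∈ x ∨ (j, k) ∈ x := by
  refine ⟨fun ⟨⟨hJ, ht⟩, _, hco⟩ => ⟨hJ, ht, fun i j k h hij hjk => ?_⟩,
    fun ⟨hJ, ht, hco⟩ => ⟨⟨hJ, ht⟩, Set.sdiff_subset, fun i j k hij hjk => ?_⟩⟩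
  · obtain ⟨h₁, h₂⟩ := mem_JnS_of_lt_of_lt (hJ h) hij hjk
    by_contra! hc
    exact (hco i j k ⟨h₁, hc.1⟩ ⟨h₂, hc.2⟩).2 h
  · refine ⟨transSet_JnS n _ _ _ hij.1 hjk.1, fun h => ?_⟩
    exact (hco i j k h hij.1.2.1 hjk.1.2.1).elim hij.2 hjk.2

theorem ClopenIn.mem_or_mem (hx : ClopenIn n x) {i j k : ℕ} (h : (i, k) ∈ x) (hij : i < j)
    (hjk : j < k) : (i, j) ∈ x ∨ (j, k) ∈ x :=
  (clopenIn_iff.1 hx).2.2 i j k h hij hjk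

theorem transGen_split {α : Type*} [LinearOrder α] {r : α → α → Prop}
    (hr : ∀ d e b, r d e → d < b → b < e → r d b ∨ r b e) {a b c : α}
    (h : TransGen r a c) (hab : a < b) (hbc : b < c) : TransGen r a b ∨ TransGen r b c := by
  induction h with
  | single h' => exact (hr _ _ _ h' hab hbc).imp .single .single
  | @tail d c had h' ih =>
    rcases lt_trichotomy b d with hbd | rfl | hdb
    · exact (ih hbd).imp id (·.tail h')
    · exact .inl had
    · exact (hr _ _ _ h' hdb hbc).imp had.tail .single

theorem ClopenIn.clS_union (hx : ClopenIn n x) (hy : ClopenIn n y) :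
    ClopenIn n (clS (x ∪ y)) := by
  refine clopenIn_iff.2 ⟨clS_subset_JnS (Set.union_subset hx.1.1 hy.1.1), transSet_clS _,
    fun i j k h hij hjk => transGen_split ?_ h hij hjk⟩
  rintro d e b (hde | hde) hdb hbe
  · exact (hx.mem_or_mem hde hdb hbe).imp .inl .inl
  · exact (hy.mem_or_mem hde hdb hbe).imp .inr .inr

theorem ClopenIn.compl (hx : ClopenIn n x) : ClopenIn n (JnS n \ x) :=
  ⟨hx.2, Set.sdiff_subset, by rw [Set.sdiff_sdiff_cancel_left hx.1.1]; exact hx.1.2⟩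

theorem ClopenIn.intS_inter (hx : ClopenIn n x) (hy : ClopenIn n y) :
    ClopenIn n (intS n (x ∩ y)) := by
  rw [intS, Set.sdiff_inter]
  exact (hx.compl.clS_union hy.compl).compl

theorem intS_subset : intS n x ⊆ x := fun p ⟨hp, hnp⟩ => by
  by_contra hc
  exact hnp (subset_clS _ ⟨hp, hc⟩)

theorem ClopenIn.subset_intS (hy : ClopenIn n y) (h : y ⊆ x) : y ⊆ intS n x := by
  refine fun p hp => ⟨hy.1.1 hp, fun hc => ?_⟩
  have := clS_mono (Set.sdiff_subset_sdiff_right h : JnS n \ x ⊆ JnS n \ y)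
  rw [hy.2.2.clS_eq] at this
  exact (this hc).2 hp

end Closure

abbrev Permutohedron (n : ℕ) : Type := {x : Set (ℕ × ℕ) // ClopenIn n x}

namespace Permutohedron

variable {n : ℕ}

instance : Lattice (Permutohedron n) where
  sup a b := ⟨clS (a.1 ∪ b.1), a.2.clS_union b.2⟩
  le_sup_left _ _ := Set.subset_union_left.trans (subset_clS _)
  le_sup_right _ _ := Set.subset_union_right.trans (subset_clS _)
  sup_le _ _ c hac hbc := (clS_mono (Set.union_subset hac hbc)).trans_eq c.2.1.2.clS_eq
  inf a b := ⟨intS n (a.1 ∩ b.1), a.2.intS_inter b.2⟩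
  inf_le_left _ _ := intS_subset.trans Set.inter_subset_left
  inf_le_right _ _ := intS_subset.trans Set.inter_subset_right
  le_inf a _ _ hab hac := a.2.subset_intS (Set.subset_inter hab hac)

instance : BoundedOrder (Permutohedron n) where
  top := ⟨JnS n, clopenIn_iff.2 ⟨subset_rfl, transSet_JnS n, fun _ _ _ h hij hjk =>
    .inl (mem_JnS_of_lt_of_lt h hij hjk).1⟩⟩
  le_top a := a.2.1.1
  bot := ⟨∅, clopenIn_iff.2
    ⟨Set.empty_subset _, fun _ _ _ h => h.elim, fun _ _ _ h => h.elim⟩⟩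
  bot_le _ := Set.empty_subset _

theorem sup_val (a b : Permutohedron n) : (a ⊔ b).1 = clS (a.1 ∪ b.1) := rfl

instance : Finite (Permutohedron n) := by
  have hJ : (JnS n).Finite := (Set.finite_Icc (1, 1) (n, n)).subset
    fun p hp => ⟨⟨hp.1, hp.1.trans hp.2.1.le⟩, ⟨hp.2.1.le.trans hp.2.2, hp.2.2⟩⟩
  exact (hJ.finite_subsets.subset fun _ hx => hx.1.1).to_subtype

noncomputable instance : Fintype (Permutohedron n) := Fintype.ofFinite _

theorem supIrred_iff_joinIrrP (a : Permutohedron n) : SupIrred a ↔ JoinIrrP n a.1 := by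
  rw [SupIrred, isMin_iff_eq_bot, JoinIrrP, Subtype.ext_iff]
  refine ⟨fun ⟨hne, hirr⟩ => ⟨a.2, hne, fun x y hx hy hxy => ?_⟩,
    fun ⟨_, hne, hirr⟩ => ⟨hne, fun b c hbc => ?_⟩⟩
  · rcases hirr (b := ⟨x, hx⟩) (c := ⟨y, hy⟩) (Subtype.ext hxy.symm) with h | h
    · exact .inl (congrArg Subtype.val h).symm
    · exact .inr (congrArg Subtype.val h).symm
  · rcases hirr b.1 c.1 b.2 c.2 (congrArg Subtype.val hbc).symm with h | h
    · exact .inl (Subtype.ext h.symm)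
    · exact .inr (Subtype.ext h.symm)

theorem joinDep_iff_drelP (a b : Permutohedron n) : JoinDep a b ↔ DrelP n a.1 b.1 := by
  simp only [JoinDep, DrelP, supIrred_iff_joinIrrP, ne_eq, Subtype.ext_iff, Subtype.exists,
    Subtype.forall, ← Subtype.coe_lt_coe, ← Subtype.coe_le_coe, sup_val, exists_prop]

def complIso (n : ℕ) : Permutohedron n ≃o (Permutohedron n)ᵒᵈ where
  toFun a := OrderDual.toDual ⟨JnS n \ a.1, a.2.compl⟩
  invFun a := ⟨JnS n \ (OrderDual.ofDual a).1, (OrderDual.ofDual a).2.compl⟩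
  left_inv a := Subtype.ext (Set.sdiff_sdiff_cancel_left a.2.1.1)
  right_inv a := Subtype.ext (Set.sdiff_sdiff_cancel_left (OrderDual.ofDual a).2.1.1)
  map_rel_iff' {a b} := Set.sdiff_subset_sdiff_iff_subset b.2.1.1 a.2.1.1

instance : Nonempty (Permutohedron n) := ⟨⊥⟩

end Permutohedron

/-! ### Join-irreducibles as arcs -/

section Arcs

variable {n u v : ℕ} {S : Set ℕ}

def bandSet (u v : ℕ) (A B : Set ℕ) (C : ℕ → ℕ → Prop) : Set (ℕ × ℕ) :=
  {z | u ≤ z.1 ∧ z.1 < z.2 ∧ z.2 ≤ v ∧ z.1 ∈ A ∧ z.2 ∈ B ∧ C z.1 z.2}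

theorem clopenIn_bandSet {A B : Set ℕ} {C : ℕ → ℕ → Prop} (hu : 1 ≤ u) (hv : v ≤ n)
    (hAB : ∀ j, u < j → j < v → j ∈ A ∨ j ∈ B)
    (hC : ∀ i j k, u ≤ i → i < j → j < k → k ≤ v → C i k → C i j ∧ C j k)
    (htrans : ∀ i j k, u ≤ i → i < j → j < k → k ≤ v → j ∈ A → j ∈ B →
      C i j → C j k → C i k) :
    ClopenIn n (bandSet u v A B C) := by
  refine clopenIn_iff.2 ⟨fun z hz => ⟨hu.trans hz.1, hz.2.1, hz.2.2.1.trans hv⟩, ?_, ?_⟩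
  · rintro i j k ⟨hui, hij, -, hiA, hjB, hCij⟩ ⟨-, hjk, hkv, hjA, hkB, hCjk⟩
    exact ⟨hui, hij.trans hjk, hkv, hiA, hkB, htrans i j k hui hij hjk hkv hjA hjB hCij hCjk⟩
  · rintro i j k ⟨hui, -, hkv, hiA, hkB, hCik⟩ hij hjk
    obtain ⟨hCij, hCjk⟩ := hC i j k hui hij hjk hkv hCik
    rcases hAB j (by omega) (by omega) with hjA | hjB
    · exact .inr ⟨by omega, hjk, hkv, hjA, hkB, hCjk⟩
    · exact .inl ⟨hui, hij, by omega, hiA, hjB, hCij⟩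

def IsArc (n u v : ℕ) (S : Set ℕ) : Prop := 1 ≤ u ∧ u < v ∧ v ≤ n ∧ S ⊆ Set.Ioo u v

def arcSet (u v : ℕ) (S : Set ℕ) : Set (ℕ × ℕ) :=
  bandSet u v {i | i = u ∨ i ∉ S} {j | j = v ∨ j ∈ S} fun _ _ => True

theorem mem_arcSet {i j : ℕ} : (i, j) ∈ arcSet u v S ↔
    u ≤ i ∧ i < j ∧ j ≤ v ∧ (i = u ∨ i ∉ S) ∧ (j = v ∨ j ∈ S) := by
  simp [arcSet, bandSet]

namespace IsArc

theorem clopenIn_arcSet (h : IsArc n u v S) : ClopenIn n (arcSet u v S) :=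
  clopenIn_bandSet h.1 h.2.2.1 (fun j _ _ => (em (j ∈ S)).symm.imp .inr .inr)
    (fun _ _ _ _ _ _ _ _ => ⟨trivial, trivial⟩) fun _ _ _ _ _ _ _ _ _ _ _ => trivial

theorem mem_arcSet_self (h : IsArc n u v S) : (u, v) ∈ arcSet u v S :=
  mem_arcSet.2 ⟨le_rfl, h.2.1, le_rfl, .inl rfl, .inl rfl⟩

theorem clopenIn_lowerCover (h : IsArc n u v S) : ClopenIn n (arcSet u v S \ {(u, v)}) := by
  have hc := clopenIn_iff.1 h.clopenIn_arcSet
  refine clopenIn_iff.2 ⟨Set.sdiff_subset.trans hc.1, fun i j k hij hjk => ?_, ?_⟩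
  · obtain ⟨hui, hij', -, -, hj⟩ := mem_arcSet.1 hij.1
    obtain ⟨-, hjk', hkv, hj', -⟩ := mem_arcSet.1 hjk.1
    exfalso
    rcases hj with hjv | hjS
    · omega
    · exact hj'.elim (fun _ => by omega) (· hjS)
  · rintro i j k ⟨hik, -⟩ hij hjk
    obtain ⟨hui, -, hkv, -, -⟩ := mem_arcSet.1 hik
    refine (hc.2.2 i j k hik hij hjk).imp (⟨·, ?_⟩) (⟨·, ?_⟩) <;>
      simp only [Set.mem_singleton_iff, Prod.ext_iff] <;> omega

theorem subset_lowerCover (h : IsArc n u v S) {q : Set (ℕ × ℕ)} (hq : ClopenIn n q)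
    (hss : q ⊂ arcSet u v S) :
    q ⊆ arcSet u v S \ {(u, v)} := by
  refine fun z hz => ⟨hss.1 hz, fun huv => hss.2 ?_⟩
  rw [Set.mem_singleton_iff] at huv
  subst huv
  rintro ⟨i, j⟩ hij
  obtain ⟨hui, hij', hjv, hi, hj⟩ := mem_arcSet.1 hij
  have hmem : ∀ {c d}, (c, d) ∈ q →
      u ≤ c ∧ c < d ∧ d ≤ v ∧ (c = u ∨ c ∉ S) ∧ (d = v ∨ d ∈ S) :=
    fun hcd => mem_arcSet.1 (hss.1 hcd)
  have huj : (u, j) ∈ q := by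
    rcases hj with rfl | hjS
    · exact hz
    · have hjI := h.2.2.2 hjS
      exact (hq.mem_or_mem hz hjI.1 hjI.2).resolve_right fun h' => by
        rcases (hmem h').2.2.2.1 with h'' | h'' <;> [omega; exact h'' hjS]
  rcases hui.lt_or_eq with hui | rfl
  · have hiS : i ∉ S := hi.resolve_left (by omega)
    exact (hq.mem_or_mem huj hui hij').resolve_left fun h' => by
      rcases (hmem h').2.2.2.2 with h'' | h'' <;> [omega; exact hiS h'']
  · exact huj

end IsArc

def arcAt (a : Set (ℕ × ℕ)) (i j : ℕ) : Set ℕ := {w | w < j ∧ (i, w) ∈ a}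

namespace ClopenIn

variable {a : Set (ℕ × ℕ)} {i j : ℕ}

theorem isArc_arcAt (ha : ClopenIn n a) (hij : (i, j) ∈ a) : IsArc n i j (arcAt a i j) :=
  have h := ha.1.1 hij
  ⟨h.1, h.2.1, h.2.2, fun _ hw => ⟨(ha.1.1 hw.2).2.1, hw.1⟩⟩

theorem arcSet_arcAt_subset (ha : ClopenIn n a) (hij : (i, j) ∈ a) :
    arcSet i j (arcAt a i j) ⊆ a := by
  rintro ⟨c, d⟩ hcd
  obtain ⟨hic, hcd', hdj, hc, hd⟩ := mem_arcSet.1 hcd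
  have hid : (i, d) ∈ a := hd.elim (· ▸ hij) (·.2)
  rcases hc with rfl | hcS
  · exact hid
  · rcases Nat.lt_or_eq_of_le hic with hic | rfl
    · exact (ha.mem_or_mem hid hic hcd').resolve_left fun h' => hcS ⟨by omega, h'⟩
    · exact hid

end ClopenIn

theorem JoinIrrP.exists_isArc {p : Set (ℕ × ℕ)} (hp : JoinIrrP n p) :
    ∃ u v S, IsArc n u v S ∧ p = arcSet u v S := by
  classical
  let a : Permutohedron n := ⟨p, hp.1⟩
  let arcs := Finset.univ.filter fun b : Permutohedron n =>
    b ≤ a ∧ ∃ u v S, IsArc n u v S ∧ b.1 = arcSet u v S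
  have hsup : arcs.sup id = a := by
    refine le_antisymm (Finset.sup_le fun b hb => (Finset.mem_filter.1 hb).2.1) ?_
    rintro ⟨i, j⟩ hij
    let b : Permutohedron n := ⟨_, (hp.1.isArc_arcAt hij).clopenIn_arcSet⟩
    have hb : b ∈ arcs := Finset.mem_filter.2 ⟨Finset.mem_univ b,
      hp.1.arcSet_arcAt_subset hij, _, _, _, hp.1.isArc_arcAt hij, rfl⟩
    exact Finset.le_sup (f := id) hb ((hp.1.isArc_arcAt hij).mem_arcSet_self)
  obtain ⟨b, hb, rfl⟩ := ((Permutohedron.supIrred_iff_joinIrrP a).2 hp).finset_sup_eq hsup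
  exact (Finset.mem_filter.1 hb).2.2

/-! ### The join-dependency relation between arcs -/

section JoinDependency

open Relation

theorem transGen_adjoin_cases {α : Type*} {r : α → α → Prop} {c d a b : α}
    (h : TransGen (fun x y => r x y ∨ x = c ∧ y = d) a b) :
    TransGen r a b ∨ ReflTransGen r a c ∧ ReflTransGen r d b := by
  induction h with
  | single h' => exact h'.imp .single fun ⟨h₁, h₂⟩ => ⟨h₁ ▸ .refl, h₂ ▸ .refl⟩
  | tail _ h' ih =>
    rcases h' with h' | ⟨rfl, rfl⟩
    · exact ih.imp (·.tail h') fun ⟨h₁, h₂⟩ => ⟨h₁, h₂.tail h'⟩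
    · exact .inr ⟨ih.elim (·.to_reflTransGen) (·.1), .refl⟩

variable {n u v u' v' : ℕ} {S S' : Set ℕ}

def IsProperSubarc (u' v' : ℕ) (S' : Set ℕ) (u v : ℕ) (S : Set ℕ) : Prop :=
  u ≤ u' ∧ v' ≤ v ∧ (u', v') ≠ (u, v) ∧ S' = S ∩ Set.Ioo u' v'

theorem IsProperSubarc.trans {u'' v'' : ℕ} {S'' : Set ℕ}
    (h₁ : IsProperSubarc u'' v'' S'' u' v' S') (h₂ : IsProperSubarc u' v' S' u v S) :
    IsProperSubarc u'' v'' S'' u v S := by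
  obtain ⟨hu₁, hv₁, hne₁, rfl⟩ := h₁
  obtain ⟨hu₂, hv₂, hne₂, rfl⟩ := h₂
  refine ⟨hu₂.trans hu₁, hv₁.trans hv₂, ?_, ?_⟩
  · simp only [ne_eq, Prod.ext_iff] at hne₁ hne₂ ⊢
    omega
  · rw [Set.inter_assoc, Set.inter_eq_right.2 (Set.Ioo_subset_Ioo hu₁ hv₁)]

theorem subarc_of_not_transGen (hq : IsArc n u' v' S') {s : Set (ℕ × ℕ)} (hsJ : s ⊆ JnS n)
    (hlow : arcSet u' v' S' \ {(u', v')} ⊆ s)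
    (hsplit : ∀ {c d}, (c, d) ∈ arcSet u v S → TransGen (fun x y => (x, y) ∈ s) c d ∨
      ReflTransGen (fun x y => (x, y) ∈ s) c u' ∧ ReflTransGen (fun x y => (x, y) ∈ s) v' d)
    {a b : ℕ} (hab : (a, b) ∈ arcSet u v S) (hab' : ¬TransGen (fun x y => (x, y) ∈ s) a b) :
    u ≤ u' ∧ v' ≤ v ∧ S' = S ∩ Set.Ioo u' v' := by
  obtain ⟨hua, -, hbv, ha, hb⟩ := mem_arcSet.1 hab
  obtain ⟨hau', hv'b⟩ := (hsplit hab).resolve_left hab'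
  have hau := le_of_reflTransGen hsJ hau'
  have hvb := le_of_reflTransGen hsJ hv'b
  refine ⟨hua.trans hau, hvb.trans hbv, Set.Subset.antisymm
    (fun w hw => ⟨by_contra fun hwS => ?_, hq.2.2.2 hw⟩)
    fun w ⟨hwS, hw₁, hw₂⟩ => by_contra fun hwS' => ?_⟩
  · obtain ⟨hw₁, hw₂⟩ := hq.2.2.2 hw
    have hwb := (hsplit (mem_arcSet.2 ⟨by omega, by omega, hbv, .inr hwS, hb⟩)).resolve_right
      fun h => by have := le_of_reflTransGen hsJ h.1; omega
    have hu'w : (u', w) ∈ s := hlow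
      ⟨mem_arcSet.2 ⟨le_rfl, hw₁, hw₂.le, .inl rfl, .inr hw⟩,
      by simp only [Set.mem_singleton_iff, Prod.ext_iff]; omega⟩
    exact hab' (TransGen.trans_right hau' (hwb.head hu'w))
  · have haw := (hsplit (mem_arcSet.2 ⟨hua, by omega, by omega, ha, .inr hwS⟩)).resolve_right
      fun h => by have := le_of_reflTransGen hsJ h.2; omega
    have hwv' : (w, v') ∈ s := hlow
      ⟨mem_arcSet.2 ⟨hw₁.le, hw₂, le_rfl, .inr hwS', .inl rfl⟩,
      by simp only [Set.mem_singleton_iff, Prod.ext_iff]; omega⟩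
    exact hab' ((haw.tail hwv').trans_left hv'b)

theorem DrelP.isProperSubarc (hp : IsArc n u v S) (hq : IsArc n u' v' S')
    (h : DrelP n (arcSet u v S) (arcSet u' v' S')) : IsProperSubarc u' v' S' u v S := by
  obtain ⟨-, hne, x, hx, hsub, hmin⟩ := h
  obtain ⟨⟨a, b⟩, hab, hab'⟩ := Set.not_subset.1 <| hmin _ hq.clopenIn_lowerCover
    ⟨Set.sdiff_subset, fun h => (h hq.mem_arcSet_self).2 rfl⟩
  set s := (arcSet u' v' S' \ {(u', v')}) ∪ x
  have hstep : ∀ c d, (c, d) ∈ arcSet u' v' S' ∪ x → (c, d) ∈ s ∨ c = u' ∧ d = v' := by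
    intro c d hcd
    by_cases he : (c, d) = (u', v')
    · exact .inr (Prod.ext_iff.1 he)
    · exact .inl (hcd.elim (fun h => Or.inl ⟨h, he⟩) Or.inr)
  obtain ⟨hu, hv, hS⟩ := subarc_of_not_transGen hq
    (Set.union_subset (Set.sdiff_subset.trans hq.clopenIn_arcSet.1.1) hx.1.1)
    Set.subset_union_left
    (fun hcd => transGen_adjoin_cases (TransGen.mono hstep _ _ (mem_clS.1 (hsub hcd)))) hab hab'
  refine ⟨hu, hv, fun heq => hne ?_, hS⟩
  obtain ⟨rfl, rfl⟩ := Prod.ext_iff.1 heq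
  rw [hS, Set.inter_eq_left.2 hp.2.2.2]

/-- The pairs of the arc `(u, v, S)` that do not span `[u', v']`, together with the pairs
`(i, u')` and `(v', j)` through which the spanning ones factor via `(u', v')`. -/
def depWitness (u v : ℕ) (S : Set ℕ) (u' v' : ℕ) : Set (ℕ × ℕ) :=
  bandSet u v {i | i = u ∨ i ∉ S ∨ i = v'} {j | j = v ∨ j ∈ S ∨ j = u'}
    fun i j => u' < i ∨ j < v'

theorem IsArc.clopenIn_depWitness (hp : IsArc n u v S) (u' v' : ℕ) :
    ClopenIn n (depWitness u v S u' v') := by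
  refine clopenIn_bandSet hp.1 hp.2.2.1 (fun j _ _ => ?_) (fun _ _ _ _ _ _ _ _ => by omega) ?_
  · by_cases hj : j ∈ S
    · exact .inr (.inr (.inl hj))
    · exact .inl (.inr (.inl hj))
  · intro i j k hui hij hjk hkv hjA hjB hCij hCjk
    by_contra hC
    rcases hjA with h | h | h <;> rcases hjB with h' | h' | h' <;> first | omega | exact h h'

theorem arcSet_subset_clS_union_depWitness (hq : IsArc n u' v' S') (hu : u ≤ u') (hv : v' ≤ v) :
    arcSet u v S ⊆ clS (arcSet u' v' S' ∪ depWitness u v S u' v') := by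
  set E := arcSet u' v' S' ∪ depWitness u v S u' v'
  rintro ⟨i, j⟩ hij
  obtain ⟨hui, hij', hjv, hi, hj⟩ := mem_arcSet.1 hij
  have hu'v' := hq.2.1
  by_cases hspan : i ≤ u' ∧ v' ≤ j
  · have hiu' : ReflTransGen (fun x y => (x, y) ∈ E) i u' := by
      rcases hspan.1.lt_or_eq with h | rfl
      · exact .single (.inr ⟨hui, h, by omega, hi.imp_right .inl, .inr (.inr rfl), .inr hq.2.1⟩)
      · exact .refl
    have hv'j : ReflTransGen (fun x y => (x, y) ∈ E) v' j := by
      rcases hspan.2.lt_or_eq with h | rfl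
      · exact .single (.inr ⟨by omega, h, hjv, .inr (.inr rfl), hj.imp_right .inl, .inl hq.2.1⟩)
      · exact .refl
    exact (TransGen.trans_right hiu' (.single (.inl hq.mem_arcSet_self))).trans_left hv'j
  · exact .single (.inr ⟨hui, hij', hjv, hi.imp_right .inl, hj.imp_right .inl,
      by rcases not_and_or.1 hspan with h | h <;> omega⟩)

theorem IsProperSubarc.notMem_clS (hq : IsArc n u' v' S') (h : IsProperSubarc u' v' S' u v S) :
    (u, v) ∉ clS ((arcSet u' v' S' \ {(u', v')}) ∪ depWitness u v S u' v') := by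
  obtain ⟨hu, hv, -, hS⟩ := h
  set E := (arcSet u' v' S' \ {(u', v')}) ∪ depWitness u v S u' v'
  -- `T` contains `u`, is closed under the steps of `E`, and does not contain `v`.
  let T : ℕ → Prop := fun c => c = u ∨ c = u' ∨ (c ∈ S ∧ u < c ∧ c < v')
  have hT : ∀ c d, T c → (c, d) ∈ E → T d := by
    rintro c d hc (⟨hcd, hne⟩ | ⟨huc, hcd, hdv, hcA, hdB, hC⟩)
    · obtain ⟨hu'c, hcd', hdv', hc', hd'⟩ := mem_arcSet.1 hcd
      rw [hS] at hc' hd'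
      have hcu' : c = u' := by
        rcases hc with rfl | rfl | ⟨hcS, -, hcv'⟩
        · omega
        · rfl
        · by_contra hne'
          exact hc'.resolve_left hne' ⟨hcS, lt_of_le_of_ne hu'c (Ne.symm hne'), hcv'⟩
      subst hcu'
      have hd : d ≠ v' := fun hd => hne (by rw [hd]; rfl)
      obtain ⟨hdS, -, hdv'⟩ := hd'.resolve_left hd
      exact .inr (.inr ⟨hdS, by omega, hdv'⟩)
    · have hcu' : c ≤ u' := by
        rcases hc with rfl | rfl | ⟨hcS, -, hcv'⟩
        · exact hu
        · exact le_rfl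
        · rcases hcA with h | h | h <;> first | omega | exact (h hcS).elim
      rcases hdB with h | h | h
      · omega
      · exact .inr (.inr ⟨h, by omega, by omega⟩)
      · exact .inr (.inl h)
  intro huv
  have key : ∀ {d}, TransGen (fun x y => (x, y) ∈ E) u d → T d := by
    intro d h
    induction h with
    | single h => exact hT _ _ (.inl rfl) h
    | tail _ h ih => exact hT _ _ ih h
  have := hq.2.1
  rcases key (d := v) (mem_clS.1 huv) with h | h | ⟨-, -, h⟩ <;> omega

theorem drelP_of_isProperSubarc (hp : IsArc n u v S) (hq : IsArc n u' v' S')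
    (hirr : JoinIrrP n (arcSet u' v' S')) (h : IsProperSubarc u' v' S' u v S) :
    DrelP n (arcSet u v S) (arcSet u' v' S') := by
  refine ⟨hirr, fun heq => h.2.2.1 ?_, depWitness u v S u' v', hp.clopenIn_depWitness u' v',
    arcSet_subset_clS_union_depWitness hq h.1 h.2.1, fun q hq' hss hsub => ?_⟩
  · obtain ⟨hu, -, hv, -⟩ := mem_arcSet.1 (heq ▸ hp.mem_arcSet_self)
    rw [Prod.ext_iff]
    exact ⟨le_antisymm hu h.1, le_antisymm h.2.1 hv⟩
  · exact h.notMem_clS hq <|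
      clS_mono (Set.union_subset_union_left _ (hq.subset_lowerCover hq' hss))
        (hsub hp.mem_arcSet_self)

theorem drelP_trans {p q r : Set (ℕ × ℕ)} (hp : JoinIrrP n p) (hq : JoinIrrP n q)
    (hr : JoinIrrP n r) (hpq : DrelP n p q) (hqr : DrelP n q r) : DrelP n p r := by
  obtain ⟨u, v, S, hS, rfl⟩ := hp.exists_isArc
  obtain ⟨u', v', S', hS', rfl⟩ := hq.exists_isArc
  obtain ⟨u'', v'', S'', hS'', rfl⟩ := hr.exists_isArc
  exact drelP_of_isProperSubarc hS hS'' hr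
    ((hqr.isProperSubarc hS' hS'').trans (hpq.isProperSubarc hS hS'))

end JoinDependency

/-! ### Boundedness of `P(n)` -/

theorem wellFounded_joinDep_permutohedron (n : ℕ) :
    WellFounded fun q p : Permutohedron n => SupIrred p ∧ JoinDep p q :=
  wellFounded_joinDep_of_trans fun p q r hp hq hr hpq hqr => by
    simp only [Permutohedron.joinDep_iff_drelP, Permutohedron.supIrred_iff_joinIrrP] at *
    exact drelP_trans hp hq hr hpq hqr

theorem wellFounded_joinDep_permutohedron_dual (n : ℕ) :
    WellFounded fun q p : (Permutohedron n)ᵒᵈ => SupIrred p ∧ JoinDep p q :=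
  wellFounded_joinDep_of_trans fun p q r hp hq hr hpq hqr => by
    let e := (Permutohedron.complIso n).symm
    rw [← e.supIrred_apply_iff] at hp hq hr
    rw [← e.joinDep_apply_iff] at hpq hqr ⊢
    simp only [Permutohedron.joinDep_iff_drelP, Permutohedron.supIrred_iff_joinIrrP] at *
    exact drelP_trans hp hq hr hpq hqr

theorem isBoundedSurjectionOntoPerm_freeLattice (n : ℕ) :
    IsBoundedSurjectionOntoPerm n (FreeLattice (Permutohedron n)) := by
  let f := FreeLattice.lift (id : Permutohedron n → Permutohedron n)
  refine ⟨fun z => (f z).1, fun z => (f z).2, fun x hx => ⟨FreeLattice.of ⟨x, hx⟩, rfl⟩,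
    fun z w => ⟨congrArg Subtype.val (map_sup f z w), congrArg Subtype.val (map_inf f z w)⟩,
    fun x hx => ?_⟩
  have hfiber : {z | (f z).1 = x} = {z | f z = ⟨x, hx⟩} := by
    simp only [Subtype.ext_iff]
  rw [hfiber]
  exact exists_isLeast_isGreatest_fiber FreeLattice.latticeGenerated_of (fun a => ⟨a, rfl⟩)
    (wellFounded_joinDep_permutohedron n) (wellFounded_joinDep_permutohedron_dual n) _

/-- The join-dependency relation on the join-irreducibles of `P(n)` is a strict partial
order (irreflexive and transitive, hence without cycles); consequently the permutohedron
`P(n)` is a bounded homomorphic image of a free lattice. -/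
theorem stmt7 (n : ℕ) :
    ((∀ p, ¬ DrelP n p p) ∧
      (∀ p q r, JoinIrrP n p → JoinIrrP n q → JoinIrrP n r →
        DrelP n p q → DrelP n q r → DrelP n p r)) ∧
    ∃ (F : Type) (instF : Lattice F) (X : Set F),
      @IsFreeLatticeOn F instF X ∧ @IsBoundedSurjectionOntoPerm n F instF :=
  ⟨⟨fun _ h => h.2.1 rfl, fun _ _ _ => drelP_trans⟩, FreeLattice (Permutohedron n),
    inferInstance, Set.range FreeLattice.of, FreeLattice.isFreeLatticeOn_range_of,
    isBoundedSurjectionOntoPerm_freeLattice n⟩
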